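/- arXiv:2503.03498 — 3 statements merged into one kernel-verified Lean document; each statement's English description precedes it below -/
import Mathlib

section
/- A quantale is strongly spatial if and only if it is spatial and semi-unital. -/
/-- A quantale: a complete lattice with an associative multiplication that
preserves arbitrary joins in each variable. -/
class Quantale' (α : Type*) extends CompleteLattice α, Semigroup α where
  mul_sSup_eq : ∀ (a : α) (s : Set α), a * sSup s = ⨆ b ∈ s, a * b
  sSup_mul_eq : ∀ (s : Set α) (a : α), sSup s * a = ⨆ b ∈ s, b * a

section Defs

variable {α : Type*} [Quantale' α]

/-- `a` is left-sided: `⊤ * a ≤ a`. -/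
def IsLeftSided (a : α) : Prop := ⊤ * a ≤ a

/-- `a` is right-sided: `a * ⊤ ≤ a`. -/
def IsRightSided (a : α) : Prop := a * ⊤ ≤ a

/-- `a` is two-sided. -/
def IsTwoSided (a : α) : Prop := IsLeftSided a ∧ IsRightSided a

/-- A quantale is semi-unital if `a ≤ ⊤ * a` and `a ≤ a * ⊤` for all `a`. -/
def SemiUnital (α : Type*) [Quantale' α] : Prop := ∀ a : α, a ≤ ⊤ * a ∧ a ≤ a * ⊤

/-- A quantale is semi-integral if `a * ⊤ * b ≤ a * b` for all `a`, `b`. -/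
def SemiIntegral (α : Type*) [Quantale' α] : Prop := ∀ a b : α, a * ⊤ * b ≤ a * b

/-- A quantale is a factor if its only two-sided elements are `⊥` and `⊤`. -/
def IsFactor (α : Type*) [Quantale' α] : Prop := ∀ a : α, IsTwoSided a → a = ⊥ ∨ a = ⊤

/-- Prime element of a quantale. -/
def IsPrime (p : α) : Prop :=
  p ≠ ⊤ ∧ ∀ a b : α, a * b ≤ p → a * ⊤ ≤ p ∨ ⊤ * b ≤ p

/-- Strongly prime element of a quantale. -/
def IsStronglyPrime (p : α) : Prop :=
  p ≠ ⊤ ∧ ∀ a b : α, a * b ≤ p → a ⊔ a * ⊤ ≤ p ∨ b ⊔ ⊤ * b ≤ p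

/-- A quantale is spatial if every element is a meet of prime elements. -/
def Spatial (α : Type*) [Quantale' α] : Prop :=
  ∀ a : α, ∃ S : Set α, (∀ p ∈ S, IsPrime p) ∧ a = sInf S

/-- A quantale is strongly spatial if every element is a meet of strongly prime elements. -/
def StronglySpatial (α : Type*) [Quantale' α] : Prop :=
  ∀ a : α, ∃ S : Set α, (∀ p ∈ S, IsStronglyPrime p) ∧ a = sInf S

end Defs

/-!
Every strongly prime element is prime, and under semi-unitality `a ≤ a * ⊤` and `b ≤ ⊤ * b`
turn the two alternatives of primality into those of strong primality. Conversely, a strongly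
prime `p` above `⊤ * a` cannot contain `⊤ = ⊤ ⊔ ⊤ * ⊤`, so it contains `a`; writing `⊤ * a` as a
meet of strongly prime elements gives `a ≤ ⊤ * a`, and symmetrically `a ≤ a * ⊤`.
-/

section StrongPrimality

variable {Q : Type*} [Quantale' Q] {p a : Q}

theorem IsStronglyPrime.isPrime (hp : IsStronglyPrime p) : IsPrime p :=
  ⟨hp.1, fun a b hab => (hp.2 a b hab).imp le_sup_right.trans le_sup_right.trans⟩

theorem IsPrime.isStronglyPrime (hQ : SemiUnital Q) (hp : IsPrime p) : IsStronglyPrime p := by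
  refine ⟨hp.1, fun a b hab => ?_⟩
  rcases hp.2 a b hab with ha | hb
  · exact Or.inl (sup_le ((hQ a).2.trans ha) ha)
  · exact Or.inr (sup_le ((hQ b).1.trans hb) hb)

theorem IsStronglyPrime.le_of_top_mul_le (hp : IsStronglyPrime p) (h : ⊤ * a ≤ p) : a ≤ p := by
  rcases hp.2 ⊤ a h with htop | ha
  · exact absurd (top_le_iff.mp (le_sup_left.trans htop)) hp.1
  · exact le_sup_left.trans ha

theorem IsStronglyPrime.le_of_mul_top_le (hp : IsStronglyPrime p) (h : a * ⊤ ≤ p) : a ≤ p := by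
  rcases hp.2 a ⊤ h with ha | htop
  · exact le_sup_left.trans ha
  · exact absurd (top_le_iff.mp (le_sup_left.trans htop)) hp.1

theorem StronglySpatial.spatial (hQ : StronglySpatial Q) : Spatial Q := fun a => by
  obtain ⟨S, hS, rfl⟩ := hQ a
  exact ⟨S, fun p hp => (hS p hp).isPrime, rfl⟩

theorem StronglySpatial.semiUnital (hQ : StronglySpatial Q) : SemiUnital Q := by
  intro a
  constructor
  · obtain ⟨S, hS, hSa⟩ := hQ (⊤ * a)
    rw [hSa]
    exact le_sInf fun p hp => (hS p hp).le_of_top_mul_le (hSa ▸ sInf_le hp)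
  · obtain ⟨S, hS, hSa⟩ := hQ (a * ⊤)
    rw [hSa]
    exact le_sInf fun p hp => (hS p hp).le_of_mul_top_le (hSa ▸ sInf_le hp)

theorem Spatial.stronglySpatial (hsp : Spatial Q) (hsu : SemiUnital Q) : StronglySpatial Q :=
  fun a => by
    obtain ⟨S, hS, rfl⟩ := hsp a
    exact ⟨S, fun p hp => (hS p hp).isStronglyPrime hsu, rfl⟩

end StrongPrimality

/-- A quantale is strongly spatial iff it is spatial and semi-unital. -/
theorem stmt6 {Q : Type*} [Quantale' Q] :
    StronglySpatial Q ↔ Spatial Q ∧ SemiUnital Q :=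
  ⟨fun h => ⟨h.spatial, h.semiUnital⟩, fun h => h.1.stronglySpatial h.2⟩
end

section
/- Let Q be a quantic frame with quotient map π : 𝕃(Q) ⊗ ℝ(Q) → Q (a surjective quantale homomorphism with π(α ⊗ ⊤) = α for left-sided α and π(⊤ ⊗ β) = β for right-sided β). If the two-sided elements 𝕀(Q) have no zero divisors, then for every left-sided α ≠ ⊥ and right-sided β ≠ ⊥, one has π(α ⊗ β) ≠ ⊥. -/
/-!
The two-sided elements `α * ⊤` and `⊤ * β` are nonzero by semi-unitality, so their product is
nonzero. Computing that product through `π` gives `π ((α * ⊤ * ⊤) ⊗ (⊤ * ⊤ * β))`, which is below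
`π ((⊤ * α * ⊤) ⊗ (⊤ * β * ⊤)) = π ((⊤ ⊗ ⊤) ⋆ (α ⊗ β) ⋆ (⊤ ⊗ ⊤)) = ⊤ * π (α ⊗ β) * ⊤`.
Hence `π (α ⊗ β) = ⊥` would force that product to vanish.
-/

theorem monotone_of_map_sSup {α β : Type*} [CompleteLattice α] [CompleteLattice β] {f : α → β}
    (hf : ∀ s : Set α, f (sSup s) = ⨆ x ∈ s, f x) : Monotone f :=
  OrderHomClass.mono (sSupHom.mk f fun s => by rw [hf, sSup_image])

namespace Quantale'

variable {α : Type*} [Quantale' α]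

instance : MulLeftMono α :=
  ⟨fun a _ _ h => monotone_of_map_sSup (mul_sSup_eq a) h⟩

instance : MulRightMono α :=
  ⟨fun a _ _ h => monotone_of_map_sSup (f := (· * a)) (sSup_mul_eq · a) h⟩

theorem bot_mul (a : α) : ⊥ * a = ⊥ := by
  simpa using sSup_mul_eq ∅ a

theorem mul_bot (a : α) : a * ⊥ = ⊥ := by
  simpa using mul_sSup_eq a ∅

end Quantale'

section Sided

variable {α : Type*} [Quantale' α]

theorem isLeftSided_top : IsLeftSided (⊤ : α) := le_top

theorem isLeftSided_top_mul (a : α) : IsLeftSided (⊤ * a) := by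
  rw [IsLeftSided, ← mul_assoc]
  exact mul_le_mul_left le_top a

theorem isRightSided_mul_top (a : α) : IsRightSided (a * ⊤) := by
  rw [IsRightSided, mul_assoc]
  exact mul_le_mul_right le_top a

theorem IsLeftSided.isTwoSided_mul_top {a : α} (ha : IsLeftSided a) : IsTwoSided (a * ⊤) := by
  refine ⟨?_, isRightSided_mul_top a⟩
  rw [IsLeftSided, ← mul_assoc]
  exact mul_le_mul_left ha ⊤

theorem IsRightSided.isTwoSided_top_mul {b : α} (hb : IsRightSided b) : IsTwoSided (⊤ * b) := by
  refine ⟨isLeftSided_top_mul b, ?_⟩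
  rw [IsRightSided, mul_assoc]
  exact mul_le_mul_right hb ⊤

theorem SemiUnital.mul_top_ne_bot (h : SemiUnital α) {a : α} (ha : a ≠ ⊥) : a * ⊤ ≠ ⊥ :=
  fun h0 => ha (le_bot_iff.mp (h0 ▸ (h a).2))

theorem SemiUnital.top_mul_ne_bot (h : SemiUnital α) {a : α} (ha : a ≠ ⊥) : ⊤ * a ≠ ⊥ :=
  fun h0 => ha (le_bot_iff.mp (h0 ▸ (h a).1))

end Sided

theorem mul_top_mul_top_mul_le_top_mul_map_tmul_mul_top {Q T : Type*} [Quantale' Q] [Quantale' T]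
    (hsu : SemiUnital Q) {tmul : Q → Q → T}
    (htmul_mono_left : ∀ b, Monotone (tmul · b)) (htmul_mono_right : ∀ a, Monotone (tmul a))
    (htmulMul : ∀ a₁ a₂ b₁ b₂ : Q, IsLeftSided a₁ → IsLeftSided a₂ →
      IsRightSided b₁ → IsRightSided b₂ →
      tmul a₁ b₁ * tmul a₂ b₂ = tmul (a₁ * a₂) (b₁ * b₂))
    {π : T → Q} (hπ_mono : Monotone π) (hπmul : ∀ x y : T, π (x * y) = π x * π y)
    (hπL : ∀ a : Q, IsLeftSided a → π (tmul a ⊤) = a)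
    (hπR : ∀ b : Q, IsRightSided b → π (tmul ⊤ b) = b)
    {a b : Q} (ha : IsLeftSided a) (hb : IsRightSided b) :
    a * ⊤ * (⊤ * b) ≤ ⊤ * π (tmul a b) * ⊤ := by
  have haT := ha.isTwoSided_mul_top
  have hTb := hb.isTwoSided_top_mul
  have hleft : a * ⊤ * ⊤ ≤ ⊤ * a * ⊤ :=
    haT.2.trans (mul_le_mul_left (hsu a).1 ⊤)
  have hright : ⊤ * (⊤ * b) ≤ ⊤ * b * ⊤ :=
    hTb.1.trans (hsu (⊤ * b)).2
  calc a * ⊤ * (⊤ * b) = π (tmul (a * ⊤) ⊤ * tmul ⊤ (⊤ * b)) := by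
        rw [hπmul, hπL _ haT.1, hπR _ hTb.2]
    _ = π (tmul (a * ⊤ * ⊤) (⊤ * (⊤ * b))) := by
        rw [htmulMul _ _ _ _ haT.1 isLeftSided_top le_top hTb.2]
    _ ≤ π (tmul (⊤ * a * ⊤) (⊤ * b * ⊤)) :=
        hπ_mono ((htmul_mono_left _ hleft).trans (htmul_mono_right _ hright))
    _ = π (tmul ⊤ ⊤ * tmul a b * tmul ⊤ ⊤) := by
        rw [htmulMul _ _ _ _ isLeftSided_top ha le_top hb,
          htmulMul _ _ _ _ (isLeftSided_top_mul a) isLeftSided_top hTb.2 le_top]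
    _ = ⊤ * π (tmul a b) * ⊤ := by
        rw [hπmul, hπmul, hπL ⊤ isLeftSided_top]

theorem stmt17_general {Q T : Type u} [Quantale' Q] [Quantale' T]
    (hsu : SemiUnital Q)
    (tmul : Q → Q → T)
    (htmulL : ∀ (s : Set Q) (b : Q), tmul (sSup s) b = ⨆ a ∈ s, tmul a b)
    (htmulR : ∀ (a : Q) (s : Set Q), tmul a (sSup s) = ⨆ b ∈ s, tmul a b)
    (htmulMul : ∀ a₁ a₂ b₁ b₂ : Q, IsLeftSided a₁ → IsLeftSided a₂ →
      IsRightSided b₁ → IsRightSided b₂ →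
      tmul a₁ b₁ * tmul a₂ b₂ = tmul (a₁ * a₂) (b₁ * b₂))
    (π : T → Q)
    (hπjoin : ∀ s : Set T, π (sSup s) = ⨆ x ∈ s, π x)
    (hπmul : ∀ x y : T, π (x * y) = π x * π y)
    (hπL : ∀ a : Q, IsLeftSided a → π (tmul a ⊤) = a)
    (hπR : ∀ b : Q, IsRightSided b → π (tmul ⊤ b) = b)
    (hI : ∀ x y : Q, IsTwoSided x → IsTwoSided y → x ≠ ⊥ → y ≠ ⊥ → x * y ≠ ⊥) :
    ∀ α β : Q, IsLeftSided α → IsRightSided β → α ≠ ⊥ → β ≠ ⊥ →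
      π (tmul α β) ≠ ⊥ := by
  intro a b ha hb ha0 hb0 hab
  have hle := mul_top_mul_top_mul_le_top_mul_map_tmul_mul_top hsu
    (fun b => monotone_of_map_sSup (htmulL · b)) (fun a => monotone_of_map_sSup (htmulR a))
    htmulMul (monotone_of_map_sSup hπjoin) hπmul hπL hπR ha hb
  rw [hab, Quantale'.mul_bot, Quantale'.bot_mul, le_bot_iff] at hle
  exact hI _ _ ha.isTwoSided_mul_top hb.isTwoSided_top_mul (hsu.mul_top_ne_bot ha0)
    (hsu.top_mul_ne_bot hb0) hle

/-- Let `Q` be a quantic frame with quotient map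
`π : 𝕃(Q) ⊗ ℝ(Q) → Q` (a surjective quantale homomorphism with `π (α ⊗ ⊤) = α` for
left-sided `α` and `π (⊤ ⊗ β) = β` for right-sided `β`).  If the two-sided elements
of `Q` have no zero divisors, then `π (α ⊗ β) ≠ ⊥` for every left-sided `α ≠ ⊥` and
right-sided `β ≠ ⊥`. -/
theorem stmt17 {Q T : Type u} [Quantale' Q] [Quantale' T]
    (hsu : SemiUnital Q)
    (tmul : Q → Q → T)
    (htmulL : ∀ (s : Set Q) (b : Q), tmul (sSup s) b = ⨆ a ∈ s, tmul a b)
    (htmulR : ∀ (a : Q) (s : Set Q), tmul a (sSup s) = ⨆ b ∈ s, tmul a b)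
    (htmulMul : ∀ a₁ a₂ b₁ b₂ : Q, IsLeftSided a₁ → IsLeftSided a₂ →
      IsRightSided b₁ → IsRightSided b₂ →
      tmul a₁ b₁ * tmul a₂ b₂ = tmul (a₁ * a₂) (b₁ * b₂))
    (π : T → Q) (hπsurj : Function.Surjective π)
    (hπjoin : ∀ s : Set T, π (sSup s) = ⨆ x ∈ s, π x)
    (hπmul : ∀ x y : T, π (x * y) = π x * π y)
    (hπL : ∀ a : Q, IsLeftSided a → π (tmul a ⊤) = a)
    (hπR : ∀ b : Q, IsRightSided b → π (tmul ⊤ b) = b)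
    (hI : ∀ x y : Q, IsTwoSided x → IsTwoSided y → x ≠ ⊥ → y ≠ ⊥ → x * y ≠ ⊥) :
    ∀ α β : Q, IsLeftSided α → IsRightSided β → α ≠ ⊥ → β ≠ ⊥ →
      π (tmul α β) ≠ ⊥ :=
  stmt17_general hsu tmul htmulL htmulR htmulMul π hπjoin hπmul hπL hπR hI
end

section
/- Let Q be an arbitrary quantale and Q̂ = Q ∪ {⊤̂} its semi-unitalization, where ⊤̂ is a new top element which is idempotent and acts by α ⋆ ⊤̂ = α ∨ (α * ⊤) and ⊤̂ ⋆ α = α ∨ (⊤ * α). Then Q̂ is a semi-unital quantale, the old top ⊤ of Q is a two-sided prime element of Q̂, and the prime elements of Q̂ are exactly the strongly prime elements of Q together with ⊤. Consequently, Q is strongly spatial if and only if Q̂ is spatial. -/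
section SemiUnitalization

variable {Q : Type*} [Quantale' Q]

/-- The multiplication of the semi-unitalization `Q̂ = Q ∪ {⊤̂}`, realized on `WithTop Q`:
the new top `⊤̂` is idempotent and acts by `α ⋆ ⊤̂ = α ⊔ (α * ⊤)` and
`⊤̂ ⋆ α = α ⊔ (⊤ * α)`. -/
noncomputable def hatMul (x y : WithTop Q) : WithTop Q :=
  WithTop.recTopCoe
    (WithTop.recTopCoe (⊤ : WithTop Q) (fun b : Q => ((b ⊔ ⊤ * b : Q) : WithTop Q)) y)
    (fun a : Q =>
      WithTop.recTopCoe ((a ⊔ a * ⊤ : Q) : WithTop Q)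
        (fun b : Q => ((a * b : Q) : WithTop Q)) y)
    x

/-- Prime elements of the semi-unitalization `Q̂`. -/
def HatPrime (p : WithTop Q) : Prop :=
  p ≠ ⊤ ∧ ∀ x y : WithTop Q, hatMul x y ≤ p → hatMul x ⊤ ≤ p ∨ hatMul ⊤ y ≤ p

/-!
Think of `⊤̂` as `1 ∨ ⊤` in a unitalization of `Q`: this explains its action, and associativity
and join preservation of `⋆` come down to distributivity in `Q` together with `⊤ * ⊤ ≤ ⊤`.
Since `α ⋆ ⊤̂ = α ∨ α * ⊤` and `⊤̂ ⋆ β = β ∨ ⊤ * β`, the prime condition in `Q̂` at an element of `Q`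
is exactly strong primeness in `Q`, except at the old top, where it holds vacuously. Adding that
prime to a family does not change its meet, so spatiality transfers in both directions.
-/

instance Quantale'.instIsQuantale {α : Type*} [Quantale' α] : IsQuantale α :=
  ⟨Quantale'.mul_sSup_eq, Quantale'.sSup_mul_eq⟩

open Quantale

@[simp] theorem hatMul_coe_coe (a b : Q) : hatMul (a : WithTop Q) b = ↑(a * b) := rfl

@[simp] theorem hatMul_coe_top (a : Q) : hatMul (a : WithTop Q) ⊤ = ↑(a ⊔ a * ⊤) := rfl

@[simp] theorem hatMul_top_coe (b : Q) : hatMul ⊤ (b : WithTop Q) = ↑(b ⊔ ⊤ * b) := rfl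

@[simp] theorem hatMul_top_top : hatMul (⊤ : WithTop Q) ⊤ = ⊤ := rfl

theorem hatMul_assoc (x y z : WithTop Q) : hatMul (hatMul x y) z = hatMul x (hatMul y z) := by
  have hl : ∀ c : Q, ⊤ * (⊤ * c) ≤ ⊤ * c := fun c => by
    rw [← mul_assoc]; exact mul_le_mul_left le_top c
  have hr : ∀ a : Q, a * (⊤ * ⊤) ≤ a * ⊤ := fun a => mul_le_mul_right le_top a
  induction x using WithTop.recTopCoe <;> induction y using WithTop.recTopCoe <;>
    induction z using WithTop.recTopCoe <;>
    simp only [hatMul_coe_coe, hatMul_coe_top, hatMul_top_coe, hatMul_top_top, WithTop.coe_inj,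
      mul_sup_distrib, sup_mul_distrib, mul_assoc]
  all_goals apply le_antisymm <;> simp [hl, hr, le_sup_of_le_left, le_sup_of_le_right]

theorem hatMul_le_hatMul_top (x y : WithTop Q) : hatMul x y ≤ hatMul x ⊤ := by
  induction x using WithTop.recTopCoe <;> induction y using WithTop.recTopCoe
  case coe.coe a b => exact WithTop.coe_le_coe.mpr (le_sup_of_le_right (mul_le_mul_right le_top a))
  all_goals simp

theorem hatMul_le_top_hatMul (x y : WithTop Q) : hatMul x y ≤ hatMul ⊤ y := by
  induction x using WithTop.recTopCoe <;> induction y using WithTop.recTopCoe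
  case coe.coe a b => exact WithTop.coe_le_coe.mpr (le_sup_of_le_right (mul_le_mul_left le_top b))
  all_goals simp

theorem WithTop.exists_eq_image_coe {α : Type*} {s : Set (WithTop α)} (hs : ⊤ ∉ s) :
    ∃ t : Set α, (↑) '' t = s :=
  Set.subset_range_iff_exists_image_eq.mp fun _ hy =>
    WithTop.ne_top_iff_exists.mp (ne_of_mem_of_not_mem hy hs)

theorem WithTop.coe_biSup {α ι : Type*} [CompleteLattice α] (t : Set ι) (f : ι → α) :
    ((⨆ i ∈ t, f i : α) : WithTop α) = ⨆ i ∈ t, (f i : WithTop α) := by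
  simp [WithTop.coe_iSup, OrderTop.bddAbove]

theorem hatMul_sSup (x : WithTop Q) (s : Set (WithTop Q)) :
    hatMul x (sSup s) = ⨆ y ∈ s, hatMul x y := by
  by_cases hs : ⊤ ∈ s
  · rw [WithTop.sSup_of_top_mem hs]
    exact le_antisymm (le_iSup₂_of_le ⊤ hs le_rfl) (iSup₂_le fun y _ => hatMul_le_hatMul_top x y)
  obtain ⟨t, rfl⟩ := WithTop.exists_eq_image_coe hs
  rw [← WithTop.coe_sSup' (OrderTop.bddAbove t), iSup_image]
  induction x using WithTop.recTopCoe
  · simp only [hatMul_top_coe]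
    rw [← WithTop.coe_biSup, mul_sSup_distrib, sSup_eq_iSup]
    simp only [iSup_sup_eq]
  · simp only [hatMul_coe_coe]
    rw [← WithTop.coe_biSup, mul_sSup_distrib]

theorem sSup_hatMul (s : Set (WithTop Q)) (x : WithTop Q) :
    hatMul (sSup s) x = ⨆ y ∈ s, hatMul y x := by
  by_cases hs : ⊤ ∈ s
  · rw [WithTop.sSup_of_top_mem hs]
    exact le_antisymm (le_iSup₂_of_le ⊤ hs le_rfl) (iSup₂_le fun y _ => hatMul_le_top_hatMul y x)
  obtain ⟨t, rfl⟩ := WithTop.exists_eq_image_coe hs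
  rw [← WithTop.coe_sSup' (OrderTop.bddAbove t), iSup_image]
  induction x using WithTop.recTopCoe
  · simp only [hatMul_coe_top]
    rw [← WithTop.coe_biSup, sSup_mul_distrib, sSup_eq_iSup]
    simp only [iSup_sup_eq]
  · simp only [hatMul_coe_coe]
    rw [← WithTop.coe_biSup, sSup_mul_distrib]

theorem le_top_hatMul (x : WithTop Q) : x ≤ hatMul ⊤ x := by
  induction x using WithTop.recTopCoe <;> simp

theorem le_hatMul_top (x : WithTop Q) : x ≤ hatMul x ⊤ := by
  induction x using WithTop.recTopCoe <;> simp

theorem hatPrime_coe_iff (q : Q) : HatPrime (q : WithTop Q) ↔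
    ∀ a b : Q, a * b ≤ q → a ⊔ a * ⊤ ≤ q ∨ b ⊔ ⊤ * b ≤ q := by
  refine ⟨fun hq a b hab => ?_, fun hq => ⟨WithTop.coe_ne_top, fun x y hxy => ?_⟩⟩
  · simpa using hq.2 a b (WithTop.coe_le_coe.mpr hab)
  induction x using WithTop.recTopCoe <;> induction y using WithTop.recTopCoe
  case coe.coe a b => simpa using hq a b (by simpa using hxy)
  case top.top => simp at hxy
  case top.coe => exact Or.inr hxy
  case coe.top => exact Or.inl hxy

theorem hatPrime_coe_top : HatPrime ((⊤ : Q) : WithTop Q) :=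
  (hatPrime_coe_iff ⊤).mpr fun _ _ _ => Or.inl le_top

theorem hatPrime_iff (p : WithTop Q) : HatPrime p ↔
    p = ((⊤ : Q) : WithTop Q) ∨ ∃ q : Q, IsStronglyPrime q ∧ p = (q : WithTop Q) := by
  induction p using WithTop.recTopCoe with
  | top => simp [HatPrime]
  | coe q =>
    by_cases hq : q = ⊤
    · simp [hq, hatPrime_coe_top]
    · simp [hatPrime_coe_iff, IsStronglyPrime, hq]

variable (Q) in
def HatSpatial : Prop :=
  ∀ x : WithTop Q, ∃ S : Set (WithTop Q), (∀ p ∈ S, HatPrime p) ∧ x = sInf S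

theorem StronglySpatial.hatSpatial (hQ : StronglySpatial Q) : HatSpatial Q := by
  intro x
  induction x using WithTop.recTopCoe with
  | top => exact ⟨∅, by simp, by simp⟩
  | coe a =>
    obtain ⟨S, hS, rfl⟩ := hQ a
    -- `⊤` is adjoined so that the family is nonempty, which makes `sInf` commute with the coercion.
    refine ⟨(↑) '' insert ⊤ S, ?_, ?_⟩
    · rintro _ ⟨q, hq, rfl⟩
      rcases hq with rfl | hq
      · exact hatPrime_coe_top
      · exact (hatPrime_iff q).mpr (Or.inr ⟨q, hS q hq, rfl⟩)
    · rw [← WithTop.coe_sInf' (Set.insert_nonempty _ _) (OrderBot.bddBelow _), sInf_insert,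
        top_inf_eq]

theorem HatSpatial.stronglySpatial (hQ : HatSpatial Q) : StronglySpatial Q := by
  intro a
  obtain ⟨S, hS, ha⟩ := hQ a
  refine ⟨{q | IsStronglyPrime q ∧ ↑q ∈ S}, fun q hq => hq.1, le_antisymm ?_ ?_⟩
  · exact le_sInf fun q hq => WithTop.coe_le_coe.mp (ha ▸ sInf_le hq.2)
  · refine WithTop.coe_le_coe.mp (ha ▸ le_sInf fun p hp => ?_)
    rcases (hatPrime_iff p).mp (hS p hp) with rfl | ⟨q, hq, rfl⟩
    · exact WithTop.coe_le_coe.mpr le_top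
    · exact WithTop.coe_le_coe.mpr (sInf_le ⟨hq, hp⟩)

theorem stronglySpatial_iff_hatSpatial : StronglySpatial Q ↔ HatSpatial Q :=
  ⟨StronglySpatial.hatSpatial, HatSpatial.stronglySpatial⟩

/-- The semi-unitalization `Q̂` of a quantale `Q` is a semi-unital
quantale, the old top `⊤` of `Q` is a two-sided prime element of `Q̂`, the primes of
`Q̂` are exactly the strongly prime elements of `Q` together with the old top `⊤`, and
`Q` is strongly spatial iff `Q̂` is spatial. -/
theorem stmt19 :
    (∀ x y z : WithTop Q, hatMul (hatMul x y) z = hatMul x (hatMul y z)) ∧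
    (∀ (x : WithTop Q) (s : Set (WithTop Q)), hatMul x (sSup s) = ⨆ y ∈ s, hatMul x y) ∧
    (∀ (s : Set (WithTop Q)) (x : WithTop Q), hatMul (sSup s) x = ⨆ y ∈ s, hatMul y x) ∧
    hatMul (⊤ : WithTop Q) (⊤ : WithTop Q) = ⊤ ∧
    (∀ x : WithTop Q, x ≤ hatMul ⊤ x ∧ x ≤ hatMul x ⊤) ∧
    hatMul (((⊤ : Q) : WithTop Q)) ⊤ ≤ ((⊤ : Q) : WithTop Q) ∧
    hatMul ⊤ (((⊤ : Q) : WithTop Q)) ≤ ((⊤ : Q) : WithTop Q) ∧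
    HatPrime (((⊤ : Q) : WithTop Q)) ∧
    (∀ p : WithTop Q, HatPrime p ↔
      (p = ((⊤ : Q) : WithTop Q) ∨ ∃ q : Q, IsStronglyPrime q ∧ p = (q : WithTop Q))) ∧
    (StronglySpatial Q ↔
      ∀ x : WithTop Q, ∃ S : Set (WithTop Q), (∀ p ∈ S, HatPrime p) ∧ x = sInf S) :=
  ⟨hatMul_assoc, hatMul_sSup, sSup_hatMul, hatMul_top_top,
    fun x => ⟨le_top_hatMul x, le_hatMul_top x⟩, WithTop.coe_le_coe.mpr le_top,
    WithTop.coe_le_coe.mpr le_top, hatPrime_coe_top, hatPrime_iff, stronglySpatial_iff_hatSpatial⟩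
end SemiUnitalization
end
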